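/- Consider the signature with atoms {a, b} and rule labels {r1, r2, r3}, and the positive disjunctive program P = { r1 : a ∨ b ←, r2 : a ← b, r3 : b ← a }. Then P has exactly two causal stable models I and I', given by I(a) = r1·a, I(b) = (r1·a)·r3·b and I'(b) = r1·b, I'(a) = (r1·b)·r2·a; in particular Atoms(I) = Atoms(I') = {a, b}, which is the unique GL-stable model of P. -/

import Mathlib

/-!  Causal values (Cabalar–Fandinno, causal stable models for disjunctive programs).

Causal values are the equivalence classes of terms (built from labels in `Lb` by possibly
infinite products `∏`, possibly infinite sums `∑` and application `·`) under the axioms of a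
completely distributive complete lattice (meet `*` = `⊓`/`sInf`, join `+` = `⊔`/`sSup`,
`1` = `⊤` the empty product, `0` = `⊥` the empty sum) together with the axioms for
application listed in the paper.  We formalize "the algebra of causal values `V_Lb`" as a
causal algebra (a completely distributive complete lattice with the extra operations
satisfying the axioms) that is free/initial, i.e. a quotient of the term algebra by exactly
the equational theory generated by the axioms. -/

open scoped Classical

namespace Causal

/-- The extra operations of a causal algebra: application `·` and label constants. -/
class CausalOps (Lb : Type) (V : Type) where
  capp : V → V → V
  clabel : Lb → V

/-- Application `t · u`. -/
def capp (Lb : Type) {V : Type} [CausalOps Lb V] (t u : V) : V :=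
  CausalOps.capp (Lb := Lb) t u

/-- The value of a label. -/
def clabel (Lb V : Type) [CausalOps Lb V] (l : Lb) : V :=
  CausalOps.clabel l

/-- The causes `C_Lb`: values with a representative term without addition, i.e. the closure
of the labels under (possibly infinite, possibly empty) products and application. -/
inductive IsCause (Lb : Type) {V : Type} [CompletelyDistribLattice V] [CausalOps Lb V] : V → Prop
  | label (l : Lb) : IsCause Lb (clabel Lb V l)
  | inf (S : Set V) (h : ∀ v ∈ S, IsCause Lb v) : IsCause Lb (sInf S)
  | app (t u : V) (ht : IsCause Lb t) (hu : IsCause Lb u) : IsCause Lb (capp Lb t u)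

/-- The axioms of a causal algebra (Figure 1 of the paper), on top of a completely
distributive complete lattice.  Here `*` is `⊓`, `+` is `⊔`, `1 = ⊤`, `0 = ⊥`. -/
class CausalAlgebra (Lb : Type) (V : Type) [CompletelyDistribLattice V] [CausalOps Lb V] :
    Prop where
  capp_assoc : ∀ t u w : V, capp Lb t (capp Lb u w) = capp Lb (capp Lb t u) w
  absorb_sup : ∀ t u w : V, t ⊔ capp Lb (capp Lb u t) w = t
  absorb_inf : ∀ t u w : V, t ⊓ capp Lb (capp Lb u t) w = capp Lb (capp Lb u t) w
  top_capp : ∀ t : V, capp Lb ⊤ t = t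
  capp_top : ∀ t : V, capp Lb t ⊤ = t
  capp_bot : ∀ t : V, capp Lb t ⊥ = ⊥
  bot_capp : ∀ t : V, capp Lb ⊥ t = ⊥
  label_idem : ∀ l : Lb, capp Lb (clabel Lb V l) (clabel Lb V l) = clabel Lb V l
  capp_sSup : ∀ (t : V) (S : Set V), capp Lb t (sSup S) = ⨆ u ∈ S, capp Lb t u
  sSup_capp : ∀ (S : Set V) (t : V), capp Lb (sSup S) t = ⨆ u ∈ S, capp Lb u t
  cause_capp_capp : ∀ c d e : V, IsCause Lb c → IsCause Lb d → IsCause Lb e → d ≠ ⊤ →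
    capp Lb (capp Lb c d) e = capp Lb c d ⊓ capp Lb d e
  cause_capp_inf : ∀ c d e : V, IsCause Lb c → IsCause Lb d → IsCause Lb e →
    capp Lb c (d ⊓ e) = capp Lb c d ⊓ capp Lb c e
  cause_inf_capp : ∀ c d e : V, IsCause Lb c → IsCause Lb d → IsCause Lb e →
    capp Lb (c ⊓ d) e = capp Lb c e ⊓ capp Lb d e
  cause_capp_sInf : ∀ (c : V) (S : Set V), IsCause Lb c → (∀ d ∈ S, IsCause Lb d) →
    S.Nonempty → capp Lb c (sInf S) = ⨅ d ∈ S, capp Lb c d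
  cause_sInf_capp : ∀ (S : Set V) (e : V), (∀ d ∈ S, IsCause Lb d) → IsCause Lb e →
    S.Nonempty → capp Lb (sInf S) e = ⨅ d ∈ S, capp Lb d e

/-- Homomorphisms of causal algebras preserve sums, products, application and labels. -/
def IsCausalHom (Lb : Type) {V W : Type} [CompletelyDistribLattice V] [CausalOps Lb V]
    [CompletelyDistribLattice W] [CausalOps Lb W] (h : V → W) : Prop :=
  (∀ S : Set V, h (sSup S) = sSup (h '' S)) ∧
  (∀ S : Set V, h (sInf S) = sInf (h '' S)) ∧
  (∀ t u : V, h (capp Lb t u) = capp Lb (h t) (h u)) ∧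
  (∀ l : Lb, h (clabel Lb V l) = clabel Lb W l)

/-- `V` is (a copy of) the algebra `V_Lb` of causal values over the labels `Lb`:
the free (initial) causal algebra over `Lb`, i.e. the quotient of the term algebra by the
equational theory generated by the axioms. -/
class IsValueAlgebra (Lb : Type) (V : Type) [CompletelyDistribLattice V] [CausalOps Lb V] :
    Prop where
  alg : CausalAlgebra Lb V
  free : ∀ (W : Type) [CompletelyDistribLattice W] [CausalOps Lb W],
    CausalAlgebra Lb W → ∃! h : V → W, IsCausalHom Lb h

/-! ### Labelled logic programs over a signature `⟨At, Lb⟩` with `At ⊆ Lb`. -/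

/-- A labelled rule
`r : A₁ ∨ … ∨ A_m ∨ not A_{m+1} ∨ … ∨ not A_n ← B₁, …, B_k, not B_{k+1}, …, not B_l`
with all head/body atoms in `At`. -/
structure LRule (Lb : Type) (At : Set Lb) where
  lbl : Lb
  hpos : Finset Lb
  hneg : Finset Lb
  bpos : Finset Lb
  bneg : Finset Lb
  hpos_sub : ∀ a ∈ hpos, a ∈ At
  hneg_sub : ∀ a ∈ hneg, a ∈ At
  bpos_sub : ∀ a ∈ bpos, a ∈ At
  bneg_sub : ∀ a ∈ bneg, a ∈ At

variable {Lb V : Type} {At : Set Lb}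

/-- The positive head, as a set of atoms. -/
def LRule.hposA (r : LRule Lb At) : Set ↥At := {a | (a : Lb) ∈ r.hpos}
/-- The negative head, as a set of atoms. -/
def LRule.hnegA (r : LRule Lb At) : Set ↥At := {a | (a : Lb) ∈ r.hneg}
/-- The positive body, as a set of atoms. -/
def LRule.bposA (r : LRule Lb At) : Set ↥At := {a | (a : Lb) ∈ r.bpos}
/-- The negative body, as a set of atoms. -/
def LRule.bnegA (r : LRule Lb At) : Set ↥At := {a | (a : Lb) ∈ r.bneg}

/-- A rule is positive iff it contains no negative literals. -/
def LRule.isPositive (r : LRule Lb At) : Prop := r.hneg = ∅ ∧ r.bneg = ∅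

/-- A program is positive iff all its rules are. -/
def PositiveProg (P : Set (LRule Lb At)) : Prop := ∀ r ∈ P, r.isPositive

section Sem

variable [CompletelyDistribLattice V] [CausalOps Lb V]

/-- The value `I(not A)` of a negative literal: `1` if `I(A) = 0` and `0` otherwise. -/
noncomputable def nval (v : V) : V := if v = ⊥ then ⊤ else ⊥

/-- The value of the body of a rule under an interpretation `I : At → V_Lb`:
`I(B₁) * … * I(B_k) * I(not B_{k+1}) * … * I(not B_l)`. -/
noncomputable def bodyVal (I : ↥At → V) (r : LRule Lb At) : V :=
  (⨅ a ∈ r.bposA, I a) ⊓ (⨅ a ∈ r.bnegA, nval (I a))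

/-- `I` satisfies a rule `r` iff `(body value) · r_lbl · A_j ≤ I(L_j)` for some head literal
`L_j` with atom `A_j`. -/
noncomputable def Satisfies (I : ↥At → V) (r : LRule Lb At) : Prop :=
  (∃ a ∈ r.hposA,
      capp Lb (capp Lb (bodyVal I r) (clabel Lb V r.lbl)) (clabel Lb V (a : Lb)) ≤ I a) ∨
  (∃ a ∈ r.hnegA,
      capp Lb (capp Lb (bodyVal I r) (clabel Lb V r.lbl)) (clabel Lb V (a : Lb)) ≤ nval (I a))

/-- `I ⊨ P`. -/
noncomputable def Models (I : ↥At → V) (P : Set (LRule Lb At)) : Prop := ∀ r ∈ P, Satisfies I r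

/-- `I` is standard (two-valued) iff it maps each atom to `{0, 1}`. -/
def IsStandard (I : ↥At → V) : Prop := ∀ a, I a = ⊥ ∨ I a = ⊤

/-- `Atoms(I) = { A ∈ At | I(A) ≠ 0 }`. -/
def AtomsOf (I : ↥At → V) : Set ↥At := {a | I a ≠ ⊥}

/-- The standard interpretation `I^st` associated to `I`. -/
noncomputable def Ist (I : ↥At → V) : ↥At → V := fun a => if I a = ⊥ then ⊥ else ⊤

/-- `I ≤ J` iff `I(A) ≤ J(A)` for every atom `A`. -/
def ile (I J : ↥At → V) : Prop := ∀ a, I a ≤ J a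

/-- `I ≼ J` iff `I ≤ J` or `Atoms(I) ⊊ Atoms(J)`. -/
def iwle (I J : ↥At → V) : Prop := ile I J ∨ AtomsOf I ⊂ AtomsOf J

/-- `I` is a causal stable model of a positive program `P` iff it is a `≼`-minimal
model of `P`. -/
noncomputable def CausalStablePos (P : Set (LRule Lb At)) (I : ↥At → V) : Prop :=
  Models I P ∧ ∀ J : ↥At → V, Models J P → iwle J I → J = I

/-- `I` is a standard stable model of a positive program `P` iff it is a `≼`-minimal
standard model of `P`. -/
noncomputable def StdStablePos (P : Set (LRule Lb At)) (I : ↥At → V) : Prop :=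
  IsStandard I ∧ Models I P ∧
    ∀ J : ↥At → V, IsStandard J → Models J P → iwle J I → J = I

end Sem

/-- `S ⊆ At` is closed under `P`. -/
def ClosedUnder (P : Set (LRule Lb At)) (S : Set ↥At) : Prop :=
  ∀ r ∈ P, r.bposA ∪ r.hnegA ⊆ S → (∀ a ∈ r.bnegA, a ∉ S) → ∃ a ∈ r.hposA, a ∈ S

/-- The result of deleting all negative literals of a rule. -/
def LRule.strip (r : LRule Lb At) : LRule Lb At :=
  ⟨r.lbl, r.hpos, ∅, r.bpos, ∅, r.hpos_sub,
    fun a ha => absurd ha (Finset.notMem_empty a),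
    r.bpos_sub, fun a ha => absurd ha (Finset.notMem_empty a)⟩

/-- The GL-reduct `P^S` of `P` w.r.t. a set of atoms `S`. -/
def glReduct (P : Set (LRule Lb At)) (S : Set ↥At) : Set (LRule Lb At) :=
  { r' | ∃ r ∈ P, (∀ a ∈ r.bnegA, a ∉ S) ∧ (∀ a ∈ r.hnegA, a ∈ S) ∧ r' = r.strip }

/-- `S` is a GL-stable model of `P` iff `S` is `⊆`-minimal among the sets closed under the
positive program `P^S`. -/
def GLStable (P : Set (LRule Lb At)) (S : Set ↥At) : Prop :=
  ClosedUnder (glReduct P S) S ∧ ∀ S' ⊆ S, ClosedUnder (glReduct P S) S' → S' = S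

section Sem2

variable [CompletelyDistribLattice V] [CausalOps Lb V]

/-- The causal reduct `P^I` of `P` w.r.t. an interpretation `I`. -/
def causalReduct (P : Set (LRule Lb At)) (I : ↥At → V) : Set (LRule Lb At) :=
  { r' | ∃ r ∈ P, (∀ a ∈ r.bnegA, I a = ⊥) ∧ (∀ a ∈ r.hnegA, I a ≠ ⊥) ∧ r' = r.strip }

/-- `I` is a causal stable model of `P` iff `I` is a causal stable model of the positive
program `P^I`. -/
noncomputable def CausalStable (P : Set (LRule Lb At)) (I : ↥At → V) : Prop :=
  CausalStablePos (causalReduct P I) I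

/-- A standard interpretation `J` is a standard stable model of `P` iff `J` is a standard
stable model of the positive program `P^J`. -/
noncomputable def StdStable (P : Set (LRule Lb At)) (I : ↥At → V) : Prop :=
  StdStablePos (causalReduct P I) I

end Sem2

end Causal

namespace Causal

/-- The labels of program 7: the atoms `a`, `b` and the rule labels `r1`, `r2`, `r3`. -/
inductive L12 : Type
  | a | b | r1 | r2 | r3
deriving DecidableEq

/-- The atoms of the signature: `At = {a, b}`. -/
def At12 : Set L12 := {L12.a, L12.b}

/-- The atom `a`. -/
def atomA : ↥At12 := ⟨L12.a, Or.inl rfl⟩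
/-- The atom `b`. -/
def atomB : ↥At12 := ⟨L12.b, Or.inr rfl⟩

private lemma memAt : ∀ x ∈ ({L12.a, L12.b} : Finset L12), x ∈ At12 := by
  intro x hx
  rcases Finset.mem_insert.mp hx with h | h
  · exact Or.inl h
  · exact Or.inr (Finset.mem_singleton.mp h)

private lemma memA : ∀ x ∈ ({L12.a} : Finset L12), x ∈ At12 := by
  intro x hx; exact Or.inl (Finset.mem_singleton.mp hx)

private lemma memB : ∀ x ∈ ({L12.b} : Finset L12), x ∈ At12 := by
  intro x hx; exact Or.inr (Finset.mem_singleton.mp hx)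

private lemma memE : ∀ x ∈ (∅ : Finset L12), x ∈ At12 := by
  intro x hx; exact absurd hx (Finset.notMem_empty x)

/-- `r1 : a ∨ b ←`. -/
def rule1 : LRule L12 At12 := ⟨L12.r1, {L12.a, L12.b}, ∅, ∅, ∅, memAt, memE, memE, memE⟩
/-- `r2 : a ← b`. -/
def rule2 : LRule L12 At12 := ⟨L12.r2, {L12.a}, ∅, {L12.b}, ∅, memA, memE, memB, memE⟩
/-- `r3 : b ← a`. -/
def rule3 : LRule L12 At12 := ⟨L12.r3, {L12.b}, ∅, {L12.a}, ∅, memB, memE, memA, memE⟩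

/-- The positive disjunctive program `P = {r1 : a ∨ b ←, r2 : a ← b, r3 : b ← a}`. -/
def P12 : Set (LRule L12 At12) := {rule1, rule2, rule3}

section
variable (V : Type) [CompletelyDistribLattice V] [CausalOps L12 V]

/-- The first causal stable model: `I(a) = r1·a` and `I(b) = (r1·a)·r3·b`. -/
def assign1 (I : ↥At12 → V) : Prop :=
  I atomA = capp L12 (clabel L12 V L12.r1) (clabel L12 V L12.a) ∧
  I atomB = capp L12 (capp L12 (capp L12 (clabel L12 V L12.r1) (clabel L12 V L12.a))
      (clabel L12 V L12.r3)) (clabel L12 V L12.b)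

/-- The second causal stable model: `I'(b) = r1·b` and `I'(a) = (r1·b)·r2·a`. -/
def assign2 (I : ↥At12 → V) : Prop :=
  I atomB = capp L12 (clabel L12 V L12.r1) (clabel L12 V L12.b) ∧
  I atomA = capp L12 (capp L12 (capp L12 (clabel L12 V L12.r1) (clabel L12 V L12.b))
      (clabel L12 V L12.r2)) (clabel L12 V L12.a)

end


/-!
Every model of `P12` satisfies `r1·a ≤ I(a)` or `r1·b ≤ I(b)`, and rules `r3`, resp. `r2`,
propagate that cause to the other atom, so every model lies above `I` or above `I'`; both are
models. Sending a causal value to the set of labels that occur in all of its alternative causes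
is a homomorphism into `(Set Lb)ᵒᵈ` with application and products read as union (it exists by
freeness of `V_Lb`); it shows that no value of `I` or `I'` is `0` and that `I` and `I'` are
incomparable. So all models make both atoms true, on models `≼` is just `≤`, and the
`≤`-minimal models are exactly `I` and `I'`. The program is positive and `{a, b}` is its only
closed set, hence its only GL-stable model.
-/

theorem minimal_iff_eq_or_eq_of_forall_le {α : Type*} [PartialOrder α] {P : α → Prop}
    {a b x : α} (ha : P a) (hb : P b) (hab : ¬a ≤ b) (hba : ¬b ≤ a)
    (hP : ∀ y, P y → a ≤ y ∨ b ≤ y) : Minimal P x ↔ x = a ∨ x = b := by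
  constructor
  · rintro ⟨hx, hmin⟩
    refine (hP x hx).imp (fun h => ?_) (fun h => ?_)
    · exact le_antisymm (hmin ha h) h
    · exact le_antisymm (hmin hb h) h
  · rintro (rfl | rfl)
    · exact ⟨ha, fun y hy hyx => (hP y hy).resolve_right fun h => hba (h.trans hyx)⟩
    · exact ⟨hb, fun y hy hyx => (hP y hy).resolve_left fun h => hab (h.trans hyx)⟩

section CausalAlgebra

variable {Lb V : Type} [CompletelyDistribLattice V] [CausalOps Lb V] [CausalAlgebra Lb V]

theorem capp_le_left (t u : V) : capp Lb t u ≤ t := by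
  simpa [CausalAlgebra.top_capp] using CausalAlgebra.absorb_sup (Lb := Lb) t ⊤ u

theorem capp_mono_left {t t' : V} (h : t ≤ t') (u : V) : capp Lb t u ≤ capp Lb t' u := by
  have := CausalAlgebra.sSup_capp (Lb := Lb) {t, t'} u
  rw [sSup_pair, sup_eq_right.mpr h, iSup_pair] at this
  exact this ▸ le_sup_left

end CausalAlgebra

instance IsValueAlgebra.toCausalAlgebra (Lb V : Type) [CompletelyDistribLattice V]
    [CausalOps Lb V] [IsValueAlgebra Lb V] : CausalAlgebra Lb V :=
  IsValueAlgebra.alg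

section CausalHom

variable {Lb V W : Type} [CompletelyDistribLattice V] [CausalOps Lb V]
  [CompletelyDistribLattice W] [CausalOps Lb W] {h : V → W}

theorem IsCausalHom.monotone (hh : IsCausalHom Lb h) : Monotone h := by
  intro t u htu
  have := hh.1 {t, u}
  rw [sSup_pair, sup_eq_right.mpr htu, Set.image_pair, sSup_pair] at this
  exact this ▸ le_sup_left

theorem IsCausalHom.map_bot (hh : IsCausalHom Lb h) : h ⊥ = ⊥ := by
  simpa using hh.1 ∅

end CausalHom

open OrderDual

abbrev LabelSets (Lb : Type) : Type := (Set Lb)ᵒᵈ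

noncomputable instance (Lb : Type) : CausalOps Lb (LabelSets Lb) :=
  ⟨fun t u => toDual (ofDual t ∪ ofDual u), fun l => toDual {l}⟩

@[simp] theorem LabelSets.ofDual_capp {Lb : Type} (t u : LabelSets Lb) :
    ofDual (capp Lb t u) = ofDual t ∪ ofDual u := rfl

instance (Lb : Type) : CausalAlgebra Lb (LabelSets Lb) where
  capp_assoc t u w := by apply ofDual.injective; simp [Set.union_assoc]
  absorb_sup t u w := by apply ofDual.injective; ext; aesop
  absorb_inf t u w := by apply ofDual.injective; ext; aesop
  top_capp t := by apply ofDual.injective; simp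
  capp_top t := by apply ofDual.injective; simp
  capp_bot t := by apply ofDual.injective; simp
  bot_capp t := by apply ofDual.injective; simp
  label_idem l := by apply ofDual.injective; simp
  capp_sSup t S := by
    apply ofDual.injective; ext; simp [or_iff_not_imp_left, forall_comm (α := ¬_)]
  sSup_capp S t := by
    apply ofDual.injective; ext; simp [or_iff_not_imp_right, forall_comm (α := ¬_)]
  cause_capp_capp c d e _ _ _ _ := by apply ofDual.injective; ext; aesop
  cause_capp_inf c d e _ _ _ := by apply ofDual.injective; ext; aesop
  cause_inf_capp c d e _ _ _ := by apply ofDual.injective; ext; aesop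
  cause_capp_sInf c S _ _ hS := by
    have hS' : ∃ a : Set Lb, toDual a ∈ S := hS
    apply ofDual.injective; ext; simp [and_or_left, exists_or, hS']
  cause_sInf_capp S e _ _ hS := by
    have hS' : ∃ a : Set Lb, toDual a ∈ S := hS
    apply ofDual.injective; ext; simp [and_or_left, exists_or, hS']

section LabelSet

variable {Lb V : Type} [CompletelyDistribLattice V] [CausalOps Lb V] [IsValueAlgebra Lb V]

theorem exists_isCausalHom_labelSets : ∃ h : V → LabelSets Lb, IsCausalHom Lb h :=
  (IsValueAlgebra.free (Lb := Lb) (V := V) (LabelSets Lb) inferInstance).exists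

variable (Lb) in
noncomputable def labelSet (v : V) : Set Lb :=
  ofDual ((exists_isCausalHom_labelSets (Lb := Lb) (V := V)).choose v)

theorem labelSet_capp (t u : V) : labelSet Lb (capp Lb t u) = labelSet Lb t ∪ labelSet Lb u :=
  congrArg ofDual (exists_isCausalHom_labelSets.choose_spec.2.2.1 t u)

theorem labelSet_clabel (l : Lb) : labelSet Lb (clabel Lb V l) = {l} :=
  congrArg ofDual (exists_isCausalHom_labelSets.choose_spec.2.2.2 l)

theorem labelSet_bot : labelSet Lb (⊥ : V) = Set.univ :=
  congrArg ofDual exists_isCausalHom_labelSets.choose_spec.map_bot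

theorem labelSet_anti {t u : V} (h : t ≤ u) : labelSet Lb u ⊆ labelSet Lb t :=
  exists_isCausalHom_labelSets.choose_spec.monotone h

theorem ne_bot_of_notMem_labelSet {v : V} {l : Lb} (hl : l ∉ labelSet Lb v) : v ≠ ⊥ := by
  rintro rfl
  exact hl (labelSet_bot (Lb := Lb) (V := V) ▸ Set.mem_univ l)

theorem not_le_of_mem_labelSet {t u : V} {l : Lb} (hu : l ∈ labelSet Lb u)
    (ht : l ∉ labelSet Lb t) : ¬t ≤ u :=
  fun h => ht (labelSet_anti h hu)

end LabelSet

section Semantics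

variable {Lb V : Type} {At : Set Lb}

theorem causalStablePos_iff_minimal [CompletelyDistribLattice V] [CausalOps Lb V]
    {P : Set (LRule Lb At)} {S : Set ↥At} (hP : ∀ J : ↥At → V, Models J P → AtomsOf J = S)
    (I : ↥At → V) : CausalStablePos P I ↔ Minimal (Models · P) I := by
  have iwle_iff : ∀ J, Models J P → Models I P → (iwle J I ↔ J ≤ I) := fun J hJ hI => by
    simp only [iwle, hP J hJ, hP I hI, ssubset_irrefl, or_false]
    rfl
  constructor
  · rintro ⟨hI, hmin⟩
    exact ⟨hI, fun J hJ hJI => (hmin J hJ ((iwle_iff J hJ hI).2 hJI)).ge⟩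
  · rintro ⟨hI, hmin⟩
    exact ⟨hI, fun J hJ hJI =>
      le_antisymm ((iwle_iff J hJ hI).1 hJI) (hmin hJ ((iwle_iff J hJ hI).1 hJI))⟩

theorem LRule.strip_eq_self {r : LRule Lb At} (hr : r.isPositive) : r.strip = r := by
  obtain ⟨hneg, bneg⟩ := hr
  cases r
  subst hneg bneg
  rfl

theorem glReduct_eq_self {P : Set (LRule Lb At)} (hP : PositiveProg P) (S : Set ↥At) :
    glReduct P S = P := by
  ext r
  constructor
  · rintro ⟨r, hr, -, -, rfl⟩
    rwa [LRule.strip_eq_self (hP r hr)]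
  · intro hr
    have hneg : r.hnegA = ∅ := by simp [LRule.hnegA, (hP r hr).1]
    have bneg : r.bnegA = ∅ := by simp [LRule.bnegA, (hP r hr).2]
    exact ⟨r, hr, by simp [bneg], by simp [hneg], (LRule.strip_eq_self (hP r hr)).symm⟩

theorem glStable_iff_of_closedUnder_iff {P : Set (LRule Lb At)} (hP : PositiveProg P)
    {S₀ : Set ↥At} (hS₀ : ∀ S, ClosedUnder P S ↔ S = S₀) (S : Set ↥At) :
    GLStable P S ↔ S = S₀ := by
  simp only [GLStable, glReduct_eq_self hP, hS₀]
  exact ⟨And.left, fun h => ⟨h, fun S' _ h' => h'.trans h.symm⟩⟩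

end Semantics

section Program

theorem forall_at12 {p : ↥At12 → Prop} : (∀ A, p A) ↔ p atomA ∧ p atomB := by
  refine ⟨fun h => ⟨h _, h _⟩, fun h => ?_⟩
  rintro ⟨A, hA | hA⟩ <;> subst hA
  exacts [h.1, h.2]

@[simp] theorem coe_atomA : (atomA : L12) = L12.a := rfl
@[simp] theorem coe_atomB : (atomB : L12) = L12.b := rfl

@[simp] theorem coe_eq_a_iff (A : ↥At12) : (A : L12) = L12.a ↔ A = atomA :=
  ⟨fun h => Subtype.ext h, fun h => h ▸ rfl⟩

@[simp] theorem coe_eq_b_iff (A : ↥At12) : (A : L12) = L12.b ↔ A = atomB :=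
  ⟨fun h => Subtype.ext h, fun h => h ▸ rfl⟩

theorem atomA_ne_atomB : atomA ≠ atomB := fun h => nomatch congrArg Subtype.val h

theorem eq_pair_iff (S : Set ↥At12) : S = {atomA, atomB} ↔ atomA ∈ S ∧ atomB ∈ S := by
  rw [Set.ext_iff, forall_at12]
  simp [atomA_ne_atomB, atomA_ne_atomB.symm]

theorem positiveProg_P12 : PositiveProg P12 := by
  simp [PositiveProg, P12, LRule.isPositive, rule1, rule2, rule3]

theorem closedUnder_P12_iff (S : Set ↥At12) : ClosedUnder P12 S ↔ S = {atomA, atomB} := by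
  have rules : ClosedUnder P12 S ↔ (atomA ∈ S ∨ atomB ∈ S) ∧ (atomB ∈ S → atomA ∈ S) ∧
      (atomA ∈ S → atomB ∈ S) := by
    simp [ClosedUnder, P12, rule1, rule2, rule3, LRule.hposA, LRule.hnegA,
      LRule.bposA, LRule.bnegA, -Subtype.exists, -Subtype.forall]
  rw [rules, eq_pair_iff]
  tauto

noncomputable def interpAB {α : Type*} (x y : α) : ↥At12 → α :=
  fun A => if A = atomA then x else y

@[simp] theorem interpAB_atomA {α : Type*} (x y : α) : interpAB x y atomA = x := if_pos rfl

@[simp] theorem interpAB_atomB {α : Type*} (x y : α) : interpAB x y atomB = y :=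
  if_neg atomA_ne_atomB.symm

theorem eq_interpAB_iff {α : Type*} {I : ↥At12 → α} {x y : α} :
    I = interpAB x y ↔ I atomA = x ∧ I atomB = y := by
  rw [funext_iff, forall_at12]
  simp

theorem interpAB_le_iff {α : Type*} [Preorder α] {I : ↥At12 → α} {x y : α} :
    interpAB x y ≤ I ↔ x ≤ I atomA ∧ y ≤ I atomB := by
  rw [Pi.le_def, forall_at12]
  simp

variable {V : Type} [CausalOps L12 V]

local notation:70 t:70 " ⬝ " u:71 => capp L12 t u
local notation "ℓ" => clabel L12 V

variable (V) in
noncomputable def stableModel1 : ↥At12 → V :=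
  interpAB (ℓ .r1 ⬝ ℓ .a) (ℓ .r1 ⬝ ℓ .a ⬝ ℓ .r3 ⬝ ℓ .b)

variable (V) in
noncomputable def stableModel2 : ↥At12 → V :=
  interpAB (ℓ .r1 ⬝ ℓ .b ⬝ ℓ .r2 ⬝ ℓ .a) (ℓ .r1 ⬝ ℓ .b)

theorem assign1_iff (I : ↥At12 → V) : assign1 V I ↔ I = stableModel1 V :=
  eq_interpAB_iff.symm

theorem assign2_iff (I : ↥At12 → V) : assign2 V I ↔ I = stableModel2 V :=
  and_comm.trans eq_interpAB_iff.symm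

variable [CompletelyDistribLattice V]

section CausalAlgebra

variable [CausalAlgebra L12 V]

theorem models_P12_iff (I : ↥At12 → V) :
    Models I P12 ↔ (ℓ .r1 ⬝ ℓ .a ≤ I atomA ∨ ℓ .r1 ⬝ ℓ .b ≤ I atomB) ∧
      I atomB ⬝ ℓ .r2 ⬝ ℓ .a ≤ I atomA ∧ I atomA ⬝ ℓ .r3 ⬝ ℓ .b ≤ I atomB := by
  simp [Models, P12, Satisfies, bodyVal, rule1, rule2, rule3, LRule.hposA, LRule.hnegA,
    LRule.bposA, LRule.bnegA, -Subtype.exists, -Subtype.forall, CausalAlgebra.top_capp]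

theorem models_stableModel1 : Models (stableModel1 V) P12 := by
  simp only [models_P12_iff, stableModel1, interpAB_atomA, interpAB_atomB]
  exact ⟨.inl le_rfl, (capp_le_left _ _).trans <| (capp_le_left _ _).trans <|
    (capp_le_left _ _).trans (capp_le_left _ _), le_rfl⟩

theorem models_stableModel2 : Models (stableModel2 V) P12 := by
  simp only [models_P12_iff, stableModel2, interpAB_atomA, interpAB_atomB]
  exact ⟨.inr le_rfl, le_rfl, (capp_le_left _ _).trans <| (capp_le_left _ _).trans <|
    (capp_le_left _ _).trans (capp_le_left _ _)⟩

theorem stableModel_le_of_models {J : ↥At12 → V} (hJ : Models J P12) :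
    stableModel1 V ≤ J ∨ stableModel2 V ≤ J := by
  obtain ⟨hr1 | hr1, hr2, hr3⟩ := (models_P12_iff J).1 hJ
  · exact .inl (interpAB_le_iff.2 ⟨hr1, (capp_mono_left (capp_mono_left hr1 _) _).trans hr3⟩)
  · exact .inr (interpAB_le_iff.2 ⟨(capp_mono_left (capp_mono_left hr1 _) _).trans hr2, hr1⟩)

end CausalAlgebra

section ValueAlgebra

variable [IsValueAlgebra L12 V]

theorem stableModel1_ne_bot : ∀ A, stableModel1 V A ≠ ⊥ := by
  refine forall_at12.2 ⟨?_, ?_⟩ <;>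
    refine ne_bot_of_notMem_labelSet (l := L12.r2) ?_ <;>
    simp [stableModel1, labelSet_capp, labelSet_clabel]

theorem stableModel2_ne_bot : ∀ A, stableModel2 V A ≠ ⊥ := by
  refine forall_at12.2 ⟨?_, ?_⟩ <;>
    refine ne_bot_of_notMem_labelSet (l := L12.r3) ?_ <;>
    simp [stableModel2, labelSet_capp, labelSet_clabel]

theorem not_stableModel2_le_stableModel1 : ¬stableModel2 V ≤ stableModel1 V := fun h =>
  not_le_of_mem_labelSet (l := L12.a) (by simp [stableModel1, labelSet_capp, labelSet_clabel])
    (by simp [stableModel2, labelSet_capp, labelSet_clabel]) (h atomB)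

theorem not_stableModel1_le_stableModel2 : ¬stableModel1 V ≤ stableModel2 V := fun h =>
  not_le_of_mem_labelSet (l := L12.b) (by simp [stableModel2, labelSet_capp, labelSet_clabel])
    (by simp [stableModel1, labelSet_capp, labelSet_clabel]) (h atomA)

theorem atomsOf_of_models {J : ↥At12 → V} (hJ : Models J P12) : AtomsOf J = {atomA, atomB} := by
  have hne : ∀ A, J A ≠ ⊥ := fun A => by
    rcases stableModel_le_of_models hJ with h | h
    · exact ne_bot_of_le_ne_bot (stableModel1_ne_bot A) (h A)
    · exact ne_bot_of_le_ne_bot (stableModel2_ne_bot A) (h A)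
  exact (eq_pair_iff _).2 ⟨hne atomA, hne atomB⟩

end ValueAlgebra

end Program

/-- The program `P = {r1 : a ∨ b ←, r2 : a ← b, r3 : b ← a}` has exactly two causal stable
models `I` and `I'`, given by `I(a) = r1·a`, `I(b) = (r1·a)·r3·b` and `I'(b) = r1·b`,
`I'(a) = (r1·b)·r2·a` (and these are distinct); in particular
`Atoms(I) = Atoms(I') = {a, b}`, which is the unique GL-stable model of `P`. -/
theorem program7_two_causal_stable_models (V : Type)
    [CompletelyDistribLattice V] [CausalOps L12 V] [IsValueAlgebra L12 V] :
    (∀ I : ↥At12 → V, CausalStablePos P12 I ↔ (assign1 V I ∨ assign2 V I)) ∧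
    (¬∃ I : ↥At12 → V, assign1 V I ∧ assign2 V I) ∧
    (∀ I : ↥At12 → V, assign1 V I ∨ assign2 V I →
      AtomsOf I = ({atomA, atomB} : Set ↥At12)) ∧
    (∀ S : Set ↥At12, GLStable P12 S ↔ S = ({atomA, atomB} : Set ↥At12)) := by
  have stable_iff : ∀ I : ↥At12 → V,
      CausalStablePos P12 I ↔ I = stableModel1 V ∨ I = stableModel2 V := fun I =>
    (causalStablePos_iff_minimal (fun _ => atomsOf_of_models) I).trans <|
      minimal_iff_eq_or_eq_of_forall_le models_stableModel1 models_stableModel2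
        not_stableModel1_le_stableModel2 not_stableModel2_le_stableModel1
        fun _ => stableModel_le_of_models
  refine ⟨fun I => by rw [stable_iff, assign1_iff, assign2_iff], ?_, ?_,
    glStable_iff_of_closedUnder_iff positiveProg_P12 closedUnder_P12_iff⟩
  · rintro ⟨I, h1, h2⟩
    exact not_stableModel1_le_stableModel2 ((assign1_iff I).1 h1 ▸ (assign2_iff I).1 h2).le
  · rintro I (h | h)
    · exact atomsOf_of_models ((assign1_iff I).1 h ▸ models_stableModel1)
    · exact atomsOf_of_models ((assign2_iff I).1 h ▸ models_stableModel2)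

end Causal
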